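/- arXiv:2603.21121 — 3 statements merged into one kernel-verified Lean document; each statement's English description precedes it below -/
import Mathlib

section
/- Let (X,d,μ) be a doubling metric measure space, 0 < s < 1, and let η : X → [0,1] be an L-Lipschitz function with L = 2/(r₁−r) for some 0 < r < r₁. Then there exists a constant C > 0 depending only on the doubling constant such that for every y ∈ X, ∫_X |η(y)−η(x)|/(μ(B_{x,y}) d(x,y)^s) dμ(x) ≤ C/(s(1−s)(r₁−r)^s), where B_{x,y} := B(x,d(x,y)) ∪ B(y,d(y,x)). -/
/-!
Write `δ = r₁ - r` and split `X \ {y}` into the dyadic annuli `2ʲδ ≤ d(x, y) < 2ʲ⁺¹δ`, `j ∈ ℤ`.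
On the `j`-th annulus the kernel is at most `1 / (μ(B(y, 2ʲδ)) (2ʲδ)ˢ)`, doubling bounds the
measure of the annulus by `Cμ μ(B(y, 2ʲδ))`, and `|η y - η x| ≤ min 1 (4 · 2ʲ)`. So the `j`-th
piece contributes at most `Cμ δ⁻ˢ min 1 (4 · 2ʲ) 2⁻ʲˢ`: a geometric series with ratio `2⁻ˢ` for
`j ≥ 0` and ratio `2⁻⁽¹⁻ˢ⁾` for `j < 0`, with sums `O(1/s)` and `O(1/(1 - s))`.
-/

open MeasureTheory Metric
open scoped ENNReal

/-- The kernel `1/(μ(B_{x,y}) d(x,y)^s)` where `B_{x,y} = B(x,d(x,y)) ∪ B(y,d(y,x))`. -/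
noncomputable def ker {X : Type*} [MetricSpace X] [MeasurableSpace X]
    (μ : Measure X) (s : ℝ) (x y : X) : ℝ≥0∞ :=
  1 / (μ (ball x (dist x y) ∪ ball y (dist y x)) * ENNReal.ofReal (dist x y ^ s))

open scoped NNReal

-- `s` need not be measurable: with no Borel structure on `X`, the annuli below need not be.
theorem setLIntegral_le_mul_measure {α : Type*} [MeasurableSpace α] (μ : Measure α)
    {f : α → ℝ≥0∞} {s : Set α} {c : ℝ≥0∞} (h : ∀ x ∈ s, f x ≤ c) :
    ∫⁻ x in s, f x ∂μ ≤ c * μ s := by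
  obtain ⟨g, hg, hgf, heq⟩ := exists_measurable_le_lintegral_eq (μ.restrict s) f
  rw [heq, ← setLIntegral_const]
  refine lintegral_mono_ae ((ae_restrict_iff (measurableSet_le hg measurable_const)).2 ?_)
  exact Filter.Eventually.of_forall fun x hx => (hgf x).trans (h x hx)

theorem tsum_int_le_of_le_geometric {w : ℤ → ℝ≥0∞} {a b c : ℝ≥0∞}
    (hpos : ∀ n : ℕ, w n ≤ a ^ n) (hneg : ∀ n : ℕ, w (-(n + 1)) ≤ c * b ^ n) :
    ∑' j, w j ≤ (1 - a)⁻¹ + c * (1 - b)⁻¹ := by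
  rw [tsum_of_nat_of_neg_add_one ENNReal.summable ENNReal.summable, ← ENNReal.tsum_geometric,
    ← ENNReal.tsum_geometric, ← ENNReal.tsum_mul_left]
  exact add_le_add (ENNReal.tsum_le_tsum hpos) (ENNReal.tsum_le_tsum hneg)

theorem inv_one_sub_inv_two_rpow_le {t : ℝ} (ht : 0 < t) (ht1 : t ≤ 1) :
    (1 - ENNReal.ofReal ((2 : ℝ) ^ t)⁻¹)⁻¹ ≤ ENNReal.ofReal (2 / t) := by
  have hbern : ((2 : ℝ) ^ t)⁻¹ ≤ 1 - t / 2 := by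
    have := rpow_one_add_le_one_add_mul_self (s := -1 / 2) (by norm_num) ht.le ht1
    rw [← Real.inv_rpow zero_le_two]
    convert this using 1 <;> norm_num
    ring
  rw [← ENNReal.ofReal_one, ← ENNReal.ofReal_sub _ (by positivity),
    ← ENNReal.ofReal_inv_of_pos (by linarith)]
  refine ENNReal.ofReal_le_ofReal ?_
  rw [← one_div, show 2 / t = 1 / (t / 2) by field_simp]
  exact one_div_le_one_div_of_le (by positivity) (by linarith)

noncomputable def dyadicWeight (s : ℝ) (j : ℤ) : ℝ := min 1 (4 * (2 : ℝ) ^ j) / ((2 : ℝ) ^ s) ^ j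

theorem dyadicWeight_natCast_le (s : ℝ) (n : ℕ) : dyadicWeight s n ≤ ((2 : ℝ) ^ s)⁻¹ ^ n := by
  simp only [dyadicWeight, zpow_natCast, inv_pow]
  rw [← one_div]
  gcongr
  exact min_le_left _ _

theorem dyadicWeight_neg_succ_le {s : ℝ} (hs1 : s < 1) (n : ℕ) :
    dyadicWeight s (-(n + 1)) ≤ 4 * ((2 : ℝ) ^ (1 - s))⁻¹ ^ n := by
  have hq : 1 ≤ (2 : ℝ) ^ (1 - s) := Real.one_le_rpow one_le_two (by linarith)
  calc dyadicWeight s (-(n + 1))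
      ≤ 4 * (2 : ℝ) ^ (-((n : ℤ) + 1)) / ((2 : ℝ) ^ s) ^ (-((n : ℤ) + 1)) := by
        unfold dyadicWeight
        gcongr
        exact min_le_right _ _
    _ = 4 * ((2 : ℝ) ^ (1 - s))⁻¹ ^ (n + 1) := by
        rw [mul_div_assoc, ← div_zpow, ← Nat.cast_succ, zpow_neg, zpow_natCast, ← inv_pow,
          Real.rpow_sub two_pos, Real.rpow_one]
    _ ≤ 4 * ((2 : ℝ) ^ (1 - s))⁻¹ ^ n := by
        gcongr 4 * ?_
        exact pow_le_pow_of_le_one (by positivity) (inv_le_one_of_one_le₀ hq) n.le_succ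

theorem tsum_dyadicWeight_le {s : ℝ} (hs : 0 < s) (hs1 : s < 1) :
    ∑' j : ℤ, ENNReal.ofReal (dyadicWeight s j) ≤ ENNReal.ofReal (8 / (s * (1 - s))) := by
  have hs1' : 0 < 1 - s := sub_pos.2 hs1
  calc ∑' j : ℤ, ENNReal.ofReal (dyadicWeight s j)
      ≤ (1 - ENNReal.ofReal ((2 : ℝ) ^ s)⁻¹)⁻¹ +
          4 * (1 - ENNReal.ofReal ((2 : ℝ) ^ (1 - s))⁻¹)⁻¹ := by
        refine tsum_int_le_of_le_geometric (fun n => ?_) (fun n => ?_)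
        · rw [← ENNReal.ofReal_pow (by positivity)]
          exact ENNReal.ofReal_le_ofReal (dyadicWeight_natCast_le s n)
        · rw [← ENNReal.ofReal_pow (by positivity), ← ENNReal.ofReal_ofNat 4,
            ← ENNReal.ofReal_mul (by norm_num)]
          exact ENNReal.ofReal_le_ofReal (dyadicWeight_neg_succ_le hs1 n)
    _ ≤ ENNReal.ofReal (2 / s) + 4 * ENNReal.ofReal (2 / (1 - s)) := by
        gcongr
        · exact inv_one_sub_inv_two_rpow_le hs hs1.le
        · exact inv_one_sub_inv_two_rpow_le hs1' (by linarith)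
    _ = ENNReal.ofReal (2 / s + 4 * (2 / (1 - s))) := by
        rw [ENNReal.ofReal_add (by positivity) (by positivity), ENNReal.ofReal_mul (by norm_num),
          ENNReal.ofReal_ofNat]
    _ ≤ ENNReal.ofReal (8 / (s * (1 - s))) := by
        refine ENNReal.ofReal_le_ofReal ?_
        rw [show 2 / s + 4 * (2 / (1 - s)) = (2 + 6 * s) / (s * (1 - s)) by field_simp; ring]
        gcongr
        linarith

theorem abs_sub_le_min_of_lipschitzWith {X : Type*} [PseudoMetricSpace X] {K : ℝ≥0}
    {η : X → ℝ} (hη : LipschitzWith K η) (hη01 : ∀ x, η x ∈ Set.Icc (0 : ℝ) 1) (x y : X) :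
    |η y - η x| ≤ min 1 (K * dist x y) := by
  refine le_min ?_ ?_
  · obtain ⟨hx0, hx1⟩ := hη01 x
    obtain ⟨hy0, hy1⟩ := hη01 y
    rw [abs_le]
    constructor <;> linarith
  · rw [← Real.dist_eq, dist_comm]
    exact hη.dist_le_mul x y

section

variable {X : Type*} [MetricSpace X]

def dyadicAnnulus (y : X) (ρ : ℝ) : Set X := {x | ρ ≤ dist x y ∧ dist x y < 2 * ρ}

theorem iUnion_dyadicAnnulus {δ : ℝ} (hδ : 0 < δ) (y : X) :
    ⋃ j : ℤ, dyadicAnnulus y (2 ^ j * δ) = {y}ᶜ := by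
  ext x
  simp only [Set.mem_iUnion, dyadicAnnulus, Set.mem_ofPred_eq, Set.mem_compl_singleton_iff]
  refine ⟨fun ⟨j, hj, _⟩ => fun hxy => ?_, fun hxy => ?_⟩
  · subst hxy
    rw [dist_self] at hj
    exact hj.not_gt (by positivity)
  · obtain ⟨j, hj, hj'⟩ := exists_mem_Ico_zpow (div_pos (dist_pos.2 hxy) hδ) one_lt_two
    refine ⟨j, (le_div_iff₀ hδ).1 hj, ?_⟩
    rw [← mul_assoc, ← zpow_one_add₀ two_ne_zero, add_comm]
    exact (div_lt_iff₀ hδ).1 hj'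

variable [MeasurableSpace X] (μ : Measure X)

theorem lintegral_le_tsum_dyadicAnnulus {δ : ℝ} (hδ : 0 < δ) {y : X} {f : X → ℝ≥0∞}
    (hf : f y = 0) :
    ∫⁻ x, f x ∂μ ≤ ∑' j : ℤ, ∫⁻ x in dyadicAnnulus y (2 ^ j * δ), f x ∂μ := by
  have hy : ∫⁻ x in {y}, f x ∂μ = 0 := by
    simpa using setLIntegral_le_mul_measure μ (s := {y}) (c := 0) fun x hx => hx ▸ hf.le
  calc ∫⁻ x, f x ∂μ = ∫⁻ x in {y} ∪ ⋃ j : ℤ, dyadicAnnulus y (2 ^ j * δ), f x ∂μ := by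
        rw [iUnion_dyadicAnnulus hδ, Set.union_compl_self, setLIntegral_univ]
    _ ≤ ∫⁻ x in {y}, f x ∂μ + ∫⁻ x in ⋃ j : ℤ, dyadicAnnulus y (2 ^ j * δ), f x ∂μ :=
        lintegral_union_le _ _ _
    _ ≤ ∑' j : ℤ, ∫⁻ x in dyadicAnnulus y (2 ^ j * δ), f x ∂μ := by
        rw [hy, zero_add]
        exact lintegral_iUnion_le _ _

theorem ker_le_of_le_dist {s ρ : ℝ} (hs : 0 ≤ s) (hρ : 0 < ρ) {x y : X} (h : ρ ≤ dist x y) :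
    ker μ s x y ≤ (μ (ball y ρ) * ENNReal.ofReal (ρ ^ s))⁻¹ := by
  rw [ker, one_div]
  refine ENNReal.inv_le_inv.2 (mul_le_mul' ?_ ?_)
  · exact measure_mono ((ball_subset_ball (by rwa [dist_comm])).trans Set.subset_union_right)
  · exact ENNReal.ofReal_le_ofReal (Real.rpow_le_rpow hρ.le h hs)

theorem setLIntegral_dyadicAnnulus_mul_ker_le {s ρ Cμ : ℝ} (hs : 0 ≤ s) (hρ : 0 < ρ) {y : X}
    (h0 : μ (ball y ρ) ≠ 0) (htop : μ (ball y ρ) ≠ ∞)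
    (hdoub : μ (ball y (2 * ρ)) ≤ ENNReal.ofReal Cμ * μ (ball y ρ))
    {g : X → ℝ≥0∞} {N : ℝ≥0∞} (hg : ∀ x ∈ dyadicAnnulus y ρ, g x ≤ N) :
    ∫⁻ x in dyadicAnnulus y ρ, g x * ker μ s x y ∂μ
      ≤ ENNReal.ofReal Cμ * N / ENNReal.ofReal (ρ ^ s) := by
  set b := μ (ball y ρ)
  set t := ENNReal.ofReal (ρ ^ s)
  calc ∫⁻ x in dyadicAnnulus y ρ, g x * ker μ s x y ∂μ
      ≤ N * (b * t)⁻¹ * μ (dyadicAnnulus y ρ) :=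
        setLIntegral_le_mul_measure μ fun x hx =>
          mul_le_mul' (hg x hx) (ker_le_of_le_dist μ hs hρ hx.1)
    _ ≤ N * (b * t)⁻¹ * (ENNReal.ofReal Cμ * b) := by
        gcongr
        exact (measure_mono fun x hx => mem_ball.2 hx.2).trans hdoub
    _ = ENNReal.ofReal Cμ * N / t * (b⁻¹ * b) := by
        rw [ENNReal.mul_inv (Or.inl h0) (Or.inl htop), div_eq_mul_inv]
        ring
    _ = ENNReal.ofReal Cμ * N / t := by
        rw [ENNReal.inv_mul_cancel h0 htop, mul_one]

theorem setLIntegral_dyadicAnnulus_cutoff_le {s δ Cμ : ℝ} (hs : 0 ≤ s) (hδ : 0 < δ)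
    (hC : 0 ≤ Cμ) {η : X → ℝ} (hη : LipschitzWith (2 / δ).toNNReal η)
    (hη01 : ∀ x, η x ∈ Set.Icc (0 : ℝ) 1) {y : X} {j : ℤ}
    (h0 : μ (ball y (2 ^ j * δ)) ≠ 0) (htop : μ (ball y (2 ^ j * δ)) ≠ ∞)
    (hdoub : μ (ball y (2 * (2 ^ j * δ))) ≤ ENNReal.ofReal Cμ * μ (ball y (2 ^ j * δ))) :
    ∫⁻ x in dyadicAnnulus y (2 ^ j * δ), ENNReal.ofReal |η y - η x| * ker μ s x y ∂μ
      ≤ ENNReal.ofReal (Cμ / δ ^ s) * ENNReal.ofReal (dyadicWeight s j) := by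
  refine (setLIntegral_dyadicAnnulus_mul_ker_le μ hs (by positivity) h0 htop hdoub
    (N := ENNReal.ofReal (min 1 (4 * 2 ^ j))) fun x hx => ?_).trans_eq ?_
  · refine ENNReal.ofReal_le_ofReal ((abs_sub_le_min_of_lipschitzWith hη hη01 x y).trans ?_)
    refine min_le_min_left 1 ?_
    rw [Real.coe_toNNReal _ (by positivity)]
    calc 2 / δ * dist x y ≤ 2 / δ * (2 * (2 ^ j * δ)) := by gcongr; exact hx.2.le
      _ = 4 * 2 ^ j := by field_simp; ring
  · rw [← ENNReal.ofReal_mul hC, ← ENNReal.ofReal_div_of_pos (by positivity),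
      ← ENNReal.ofReal_mul (by positivity)]
    congr 1
    rw [dyadicWeight, Real.mul_rpow (by positivity) hδ.le, ← Real.rpow_zpow_comm zero_le_two]
    field_simp

end

/-- Nonlocal energy density estimate for a `2/(r₁−r)`-Lipschitz cutoff `η` with `0 ≤ η ≤ 1`:
there is `C > 0` depending only on the doubling constant such that for every `y`,
`∫_X |η(y)−η(x)|/(μ(B_{x,y}) d(x,y)^s) dμ(x) ≤ C/(s(1−s)(r₁−r)^s)`. -/
theorem stmt5 {X : Type*} [MetricSpace X] [MeasurableSpace X] (μ : Measure X)
    (Cμ : ℝ) (hC : 1 ≤ Cμ)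
    (hdoub : ∀ (x : X) (r : ℝ), 0 < r →
      0 < μ (ball x r) ∧ μ (ball x r) < ⊤ ∧
        μ (ball x (2 * r)) ≤ ENNReal.ofReal Cμ * μ (ball x r)) :
    ∃ C > (0 : ℝ), ∀ (s r r₁ : ℝ) (η : X → ℝ) (y : X),
      0 < s → s < 1 → 0 < r → r < r₁ →
      LipschitzWith (Real.toNNReal (2 / (r₁ - r))) η →
      (∀ x, η x ∈ Set.Icc (0 : ℝ) 1) →
      ∫⁻ x, ENNReal.ofReal |η y - η x| * ker μ s x y ∂μ
        ≤ ENNReal.ofReal (C / (s * (1 - s) * (r₁ - r) ^ s)) := by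
  refine ⟨8 * Cμ, by positivity, fun s r r₁ η y hs hs1 _ hrr₁ hη hη01 => ?_⟩
  set δ := r₁ - r
  have hδ : 0 < δ := sub_pos.2 hrr₁
  have hannulus (j : ℤ) :=
    have ⟨h0, htop, hdoub⟩ := hdoub y (2 ^ j * δ) (by positivity)
    setLIntegral_dyadicAnnulus_cutoff_le μ hs.le hδ (by positivity) hη hη01 h0.ne' htop.ne hdoub
  calc ∫⁻ x, ENNReal.ofReal |η y - η x| * ker μ s x y ∂μ
      ≤ ∑' j : ℤ, ∫⁻ x in dyadicAnnulus y (2 ^ j * δ),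
          ENNReal.ofReal |η y - η x| * ker μ s x y ∂μ :=
        lintegral_le_tsum_dyadicAnnulus μ hδ (by simp)
    _ ≤ ∑' j : ℤ, ENNReal.ofReal (Cμ / δ ^ s) * ENNReal.ofReal (dyadicWeight s j) :=
        ENNReal.tsum_le_tsum hannulus
    _ ≤ ENNReal.ofReal (Cμ / δ ^ s) * ENNReal.ofReal (8 / (s * (1 - s))) := by
        rw [ENNReal.tsum_mul_left]
        gcongr
        exact tsum_dyadicWeight_le hs hs1
    _ = ENNReal.ofReal (8 * Cμ / (s * (1 - s) * δ ^ s)) := by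
        rw [← ENNReal.ofReal_mul (by positivity)]
        congr 1
        field_simp
end

section
/- Let (X,d,μ) be a doubling metric measure space and let E ⊂ X be measurable with μ(E ∩ B(x,t)) > β μ(B(x,t)) for all sufficiently small t > 0 (for some fixed 0 < β < 1) and μ(E ∩ B(x,r₀)) ≤ β μ(B(x,r₀)) for some r₀ > 0. Define σ' := inf{ r' > 0 : μ(E ∩ B(x,r')) ≤ β μ(B(x,r')) }. Then 0 < σ' ≤ r₀, and there exists σ with σ' ≤ σ < (3/2)σ' such that β/C_μ ≤ μ(E ∩ B(x,σ))/μ(B(x,σ)) ≤ β. -/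
/-! Below `σ'` the density of `E` exceeds `β`. Picking `σ` in the defining set with
`σ < (3/2) σ'` gives `σ/2 < σ'`, so the density at radius `σ/2` exceeds `β`, and one doubling
step `μ(B(x,σ)) ≤ C_μ μ(B(x,σ/2))` turns this into density at least `β / C_μ` at radius `σ`. -/

open MeasureTheory Metric
open scoped ENNReal

theorem exists_mem_le_lt_mul_csInf {S : Set ℝ} (hne : S.Nonempty) (hbdd : BddBelow S)
    (hpos : 0 < sInf S) {c : ℝ} (hc : 1 < c) : ∃ σ ∈ S, sInf S ≤ σ ∧ σ < c * sInf S := by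
  obtain ⟨σ, hσS, hσlt⟩ := exists_lt_of_csInf_lt hne (lt_mul_left hpos hc)
  exact ⟨σ, hσS, csInf_le hbdd hσS, hσlt⟩

theorem ENNReal.toReal_le_mul_toReal_of_le_ofReal_mul {a b : ℝ≥0∞} {C : ℝ} (hC : 0 ≤ C)
    (hb : b ≠ ⊤) (h : a ≤ ENNReal.ofReal C * b) : a.toReal ≤ C * b.toReal := by
  refine ENNReal.toReal_le_of_le_ofReal (by positivity) ?_
  rwa [ENNReal.ofReal_mul hC, ENNReal.ofReal_toReal hb]

section Density

variable {α : Type*} [MeasurableSpace α] {μ : Measure α} {E s t : Set α}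

theorem div_le_toReal_measure_inter_div_of_subset {β C : ℝ} (hβ : 0 ≤ β) (hC : 0 < C)
    (hst : s ⊆ t) (ht_pos : 0 < μ t) (ht_fin : μ t ≠ ⊤)
    (hdoub : (μ t).toReal ≤ C * (μ s).toReal)
    (hs : β * (μ s).toReal ≤ (μ (E ∩ s)).toReal) :
    β / C ≤ (μ (E ∩ t)).toReal / (μ t).toReal := by
  have ht_pos' : 0 < (μ t).toReal := ENNReal.toReal_pos ht_pos.ne' ht_fin
  have hEst : (μ (E ∩ s)).toReal ≤ (μ (E ∩ t)).toReal :=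
    ENNReal.toReal_mono (measure_ne_top_of_subset Set.inter_subset_right ht_fin)
      (measure_mono (Set.inter_subset_inter_right E hst))
  rw [div_le_div_iff₀ hC ht_pos']
  calc β * (μ t).toReal ≤ β * (C * (μ s).toReal) := mul_le_mul_of_nonneg_left hdoub hβ
    _ = C * (β * (μ s).toReal) := by ring
    _ ≤ C * (μ (E ∩ t)).toReal := by gcongr; exact hs.trans hEst
    _ = (μ (E ∩ t)).toReal * C := mul_comm _ _

end Density

theorem stmt16_general {X : Type*} [MetricSpace X] [MeasurableSpace X] (μ : Measure X)
    (Cμ : ℝ) (hC : 1 ≤ Cμ)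
    (hdoub : ∀ (y : X) (ρ : ℝ), 0 < ρ →
      0 < μ (ball y ρ) ∧ μ (ball y ρ) < ⊤ ∧
        μ (ball y (2 * ρ)) ≤ ENNReal.ofReal Cμ * μ (ball y ρ))
    (x : X) (E : Set X) (β r₀ : ℝ) (hβ : 0 < β) (hr₀ : 0 < r₀)
    (hsmall : ∃ t₀ > (0 : ℝ), ∀ t, 0 < t → t < t₀ →
      β * (μ (ball x t)).toReal < (μ (E ∩ ball x t)).toReal)
    (hr₀le : (μ (E ∩ ball x r₀)).toReal ≤ β * (μ (ball x r₀)).toReal) :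
    0 < sInf {r' : ℝ | 0 < r' ∧ (μ (E ∩ ball x r')).toReal ≤ β * (μ (ball x r')).toReal}
    ∧ sInf {r' : ℝ | 0 < r' ∧ (μ (E ∩ ball x r')).toReal ≤ β * (μ (ball x r')).toReal} ≤ r₀
    ∧ ∃ σ : ℝ,
        sInf {r' : ℝ | 0 < r' ∧ (μ (E ∩ ball x r')).toReal ≤ β * (μ (ball x r')).toReal} ≤ σ
        ∧ σ < (3 / 2) *
            sInf {r' : ℝ | 0 < r' ∧ (μ (E ∩ ball x r')).toReal ≤ β * (μ (ball x r')).toReal}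
        ∧ β / Cμ ≤ (μ (E ∩ ball x σ)).toReal / (μ (ball x σ)).toReal
        ∧ (μ (E ∩ ball x σ)).toReal / (μ (ball x σ)).toReal ≤ β := by
  obtain ⟨t₀, ht₀, hsm⟩ := hsmall
  set S := {r' : ℝ | 0 < r' ∧ (μ (E ∩ ball x r')).toReal ≤ β * (μ (ball x r')).toReal}
  have hr₀S : r₀ ∈ S := ⟨hr₀, hr₀le⟩
  have hlow : ∀ r ∈ S, t₀ ≤ r := fun r hr => not_lt.1 fun h => (hsm r hr.1 h).not_ge hr.2
  have hbdd : BddBelow S := ⟨t₀, hlow⟩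
  have hpos : 0 < sInf S := ht₀.trans_le (le_csInf ⟨r₀, hr₀S⟩ hlow)
  obtain ⟨σ, ⟨hσ, hσS⟩, hσge, hσlt⟩ :=
    exists_mem_le_lt_mul_csInf ⟨r₀, hr₀S⟩ hbdd hpos (by norm_num : (1 : ℝ) < 3 / 2)
  have hhalf : β * (μ (ball x (σ / 2))).toReal ≤ (μ (E ∩ ball x (σ / 2))).toReal := by
    have hnot : σ / 2 ∉ S := notMem_of_lt_csInf (by linarith) hbdd
    exact le_of_not_ge fun h => hnot ⟨half_pos hσ, h⟩
  obtain ⟨hball_pos, hball_fin, -⟩ := hdoub x σ hσ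
  obtain ⟨-, hhalf_fin, hdoub_half⟩ := hdoub x (σ / 2) (half_pos hσ)
  rw [mul_div_cancel₀ σ two_ne_zero] at hdoub_half
  refine ⟨hpos, csInf_le hbdd hr₀S, σ, hσge, hσlt, ?_, ?_⟩
  · exact div_le_toReal_measure_inter_div_of_subset hβ.le (by linarith)
      (ball_subset_ball (by linarith)) hball_pos hball_fin.ne
      (ENNReal.toReal_le_mul_toReal_of_le_ofReal_mul (by linarith) hhalf_fin.ne hdoub_half) hhalf
  · exact (div_le_iff₀ (ENNReal.toReal_pos hball_pos.ne' hball_fin.ne)).2 hσS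

/-- Selection of an intermediate scale with pinched density: if `E` has density `> β` in
all sufficiently small balls `B(x,t)` and density `≤ β` in `B(x,r₀)`, and
`σ' = inf{r' > 0 : μ(E ∩ B(x,r')) ≤ β μ(B(x,r'))}`, then `0 < σ' ≤ r₀` and there is
`σ ∈ [σ', (3/2)σ')` with `β/C_μ ≤ μ(E ∩ B(x,σ))/μ(B(x,σ)) ≤ β`. -/
theorem stmt16 {X : Type*} [MetricSpace X] [MeasurableSpace X] (μ : Measure X)
    (Cμ : ℝ) (hC : 1 ≤ Cμ)
    (hdoub : ∀ (y : X) (ρ : ℝ), 0 < ρ →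
      0 < μ (ball y ρ) ∧ μ (ball y ρ) < ⊤ ∧
        μ (ball y (2 * ρ)) ≤ ENNReal.ofReal Cμ * μ (ball y ρ))
    (x : X) (E : Set X) (β r₀ : ℝ) (hβ : 0 < β) (hβ1 : β < 1) (hr₀ : 0 < r₀)
    (hsmall : ∃ t₀ > (0 : ℝ), ∀ t, 0 < t → t < t₀ →
      β * (μ (ball x t)).toReal < (μ (E ∩ ball x t)).toReal)
    (hr₀le : (μ (E ∩ ball x r₀)).toReal ≤ β * (μ (ball x r₀)).toReal) :
    0 < sInf {r' : ℝ | 0 < r' ∧ (μ (E ∩ ball x r')).toReal ≤ β * (μ (ball x r')).toReal}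
    ∧ sInf {r' : ℝ | 0 < r' ∧ (μ (E ∩ ball x r')).toReal ≤ β * (μ (ball x r')).toReal} ≤ r₀
    ∧ ∃ σ : ℝ,
        sInf {r' : ℝ | 0 < r' ∧ (μ (E ∩ ball x r')).toReal ≤ β * (μ (ball x r')).toReal} ≤ σ
        ∧ σ < (3 / 2) *
            sInf {r' : ℝ | 0 < r' ∧ (μ (E ∩ ball x r')).toReal ≤ β * (μ (ball x r')).toReal}
        ∧ β / Cμ ≤ (μ (E ∩ ball x σ)).toReal / (μ (ball x σ)).toReal
        ∧ (μ (E ∩ ball x σ)).toReal / (μ (ball x σ)).toReal ≤ β :=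
  stmt16_general μ Cμ hC hdoub x E β r₀ hβ hr₀ hsmall hr₀le
end

section
/- Let (X,d,μ) be a complete connected doubling metric measure space and 0 < s < 1. Suppose that for some x ∈ Ω ⊂ X open, a locally integrable function u on Ω satisfies the weak Harnack inequality: there are C > 0 and R > 0 with B(x,2R) ⋐ Ω such that for every t ∈ ℝ and every 0 < r < R, esssup_{B(x,r/2)} (t − u) ≤ C ⨍_{B(x,r)} (t − u)₊ dμ. If moreover u ≥ β a.e. on B(x,R) for some β ∈ ℝ, then for every real t ≤ u^∧(x) and every ε > 0 there exists ρ > 0 such that u ≥ t − 2Cε a.e. on B(x,ρ); consequently u^∧ is lower semicontinuous at x. -/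
open MeasureTheory Metric Filter
open scoped ENNReal

/-- The lower approximate limit `u^∧(x)` of a real-valued function `u`. -/
noncomputable def lowerApproxLimit {X : Type*} [MetricSpace X] [MeasurableSpace X]
    (μ : Measure X) (u : X → ℝ) (x : X) : EReal :=
  sSup ((fun t : ℝ => (t : EReal)) ''
    {t : ℝ | Tendsto (fun r : ℝ => μ {y ∈ ball x r | u y < t} / μ (ball x r))
      (nhdsWithin 0 (Set.Ioi 0)) (nhds 0)})

/-!
If `t ≤ u^∧(x)` then `{u < t - ε}` has vanishing density at `x`. On a small ball `B(x,r)` the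
average of `(t - u)₊` is therefore at most `ε` (where `u ≥ t - ε`) plus `(t - β)₊` times the
density of `{u < t - ε}`, which is `≤ 2ε` for `r` small; the weak Harnack inequality turns this
into `t - u ≤ 2Cε` a.e. on `B(x, r/2)`. Lower semicontinuity follows because an a.e. lower bound
`b ≤ u` on a ball around `x` gives `b ≤ u^∧(z)` at every point `z` of the half ball.
-/

section SetIntegral

variable {X : Type*} [MeasurableSpace X] {μ : Measure X}

theorem setIntegral_max_sub_le {B : Set X} {u : X → ℝ} {t ε M : ℝ} (hB : MeasurableSet B)
    (hBfin : μ B ≠ ⊤) (hε : 0 ≤ ε) (hM0 : 0 ≤ M) (hM : ∀ᵐ y ∂μ.restrict B, t - u y ≤ M) :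
    ∫ z in B, max (t - u z) 0 ∂μ ≤ ε * μ.real B + M * μ.real {y ∈ B | u y < t - ε} := by
  set S := {y ∈ B | u y < t - ε}
  set A := toMeasurable μ S
  have hA : MeasurableSet A := measurableSet_toMeasurable μ S
  have : IsFiniteMeasure (μ.restrict B) := isFiniteMeasure_restrict.mpr hBfin
  have hpt : ∀ᵐ y ∂μ.restrict B, max (t - u y) 0 ≤ ε + A.indicator (fun _ => M) y := by
    filter_upwards [hM, ae_restrict_mem hB] with y hyM hyB
    by_cases hy : u y < t - ε
    · rw [Set.indicator_of_mem (subset_toMeasurable μ S ⟨hyB, hy⟩)]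
      exact max_le (by linarith) (by linarith)
    · have := Set.indicator_nonneg (fun _ _ => hM0) y (s := A)
      exact max_le (by linarith) (by linarith)
  have hint : Integrable (fun y => ε + A.indicator (fun _ => M) y) (μ.restrict B) :=
    (integrable_const ε).add ((integrable_const M).indicator hA)
  have hAS : (μ.restrict B).real A ≤ μ.real S :=
    ENNReal.toReal_mono (measure_ne_top_of_subset (fun _ hy => hy.1) hBfin)
      ((Measure.restrict_le_self A).trans (measure_toMeasurable S).le)
  calc ∫ z in B, max (t - u z) 0 ∂μ
      ≤ ∫ y in B, (ε + A.indicator (fun _ => M) y) ∂μ :=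
        integral_mono_of_nonneg (ae_of_all _ fun _ => le_max_right _ _) hint hpt
    _ = ε * μ.real B + M * (μ.restrict B).real A := by
        rw [integral_add (integrable_const ε) ((integrable_const M).indicator hA),
          setIntegral_const, integral_indicator_const _ hA, smul_eq_mul, smul_eq_mul,
          mul_comm, mul_comm M]
    _ ≤ ε * μ.real B + M * μ.real S := by gcongr

/-- The threshold `δ = ε / (M + 1)` on the relative measure of `{u < t - ε}` is chosen so that
`M δ ≤ ε`. -/
theorem setAverage_max_sub_le {B : Set X} {u : X → ℝ} {t ε M : ℝ} (hB : MeasurableSet B)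
    (hB0 : 0 < μ B) (hBfin : μ B ≠ ⊤) (hε : 0 ≤ ε) (hM0 : 0 ≤ M)
    (hM : ∀ᵐ y ∂μ.restrict B, t - u y ≤ M)
    (hS : μ {y ∈ B | u y < t - ε} ≤ ENNReal.ofReal (ε / (M + 1)) * μ B) :
    (∫ z in B, max (t - u z) 0 ∂μ) / μ.real B ≤ 2 * ε := by
  have hBpos : 0 < μ.real B := ENNReal.toReal_pos hB0.ne' hBfin
  have hSreal : μ.real {y ∈ B | u y < t - ε} ≤ ε / (M + 1) * μ.real B := by
    refine ENNReal.toReal_le_of_le_ofReal (by positivity) ?_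
    rwa [ENNReal.ofReal_mul (by positivity), Measure.real, ENNReal.ofReal_toReal hBfin]
  have hMδ : M * (ε / (M + 1)) ≤ ε := by
    rw [mul_div_assoc', div_le_iff₀ (by linarith)]
    nlinarith
  rw [div_le_iff₀ hBpos]
  calc ∫ z in B, max (t - u z) 0 ∂μ
      ≤ ε * μ.real B + M * μ.real {y ∈ B | u y < t - ε} :=
        setIntegral_max_sub_le hB hBfin hε hM0 hM
    _ ≤ ε * μ.real B + M * (ε / (M + 1) * μ.real B) := by gcongr
    _ ≤ 2 * ε * μ.real B := by nlinarith

end SetIntegral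

section LowerApproxLimit

variable {X : Type*} [MetricSpace X] [MeasurableSpace X] {μ : Measure X} {u : X → ℝ} {x : X}

/-- `lowerApproxLimit μ u x` is the supremum of the levels `t` with this property. -/
def SublevelDensityZero (μ : Measure X) (u : X → ℝ) (x : X) (t : ℝ) : Prop :=
  Tendsto (fun r : ℝ => μ {y ∈ ball x r | u y < t} / μ (ball x r)) (nhdsWithin 0 (Set.Ioi 0))
    (nhds 0)

theorem SublevelDensityZero.mono {t t' : ℝ} (ht : SublevelDensityZero μ u x t) (h : t' ≤ t) :
    SublevelDensityZero μ u x t' :=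
  tendsto_of_tendsto_of_tendsto_of_le_of_le tendsto_const_nhds ht (fun _ => zero_le)
    fun _ => ENNReal.div_le_div_right
      (measure_mono fun _ hy => (⟨hy.1, hy.2.trans_le h⟩ : _ ∧ _)) _

theorem SublevelDensityZero.le_lowerApproxLimit {t : ℝ} (ht : SublevelDensityZero μ u x t) :
    (t : EReal) ≤ lowerApproxLimit μ u x :=
  le_sSup (Set.mem_image_of_mem _ ht)

theorem sublevelDensityZero_of_lt_lowerApproxLimit {t : ℝ}
    (ht : (t : EReal) < lowerApproxLimit μ u x) : SublevelDensityZero μ u x t := by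
  obtain ⟨_, ⟨t', ht', rfl⟩, hlt⟩ := lt_sSup_iff.mp ht
  exact SublevelDensityZero.mono ht' (EReal.coe_le_coe_iff.mp hlt.le)

theorem le_lowerApproxLimit_of_ae_le {b ρ : ℝ} (hρ : 0 < ρ)
    (hb : ∀ᵐ y ∂μ.restrict (ball x ρ), b ≤ u y) : (b : EReal) ≤ lowerApproxLimit μ u x := by
  refine SublevelDensityZero.le_lowerApproxLimit (tendsto_const_nhds.congr' ?_)
  filter_upwards [Ioo_mem_nhdsGT hρ] with r hr
  have hsub : {y ∈ ball x r | u y < b} ⊆ ball x ρ := fun _ hy => ball_subset_ball hr.2.le hy.1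
  have hnull : μ {y ∈ ball x r | u y < b} = 0 := by
    rw [← Measure.restrict_eq_self μ hsub]
    exact measure_mono_null (fun y hy => not_le.mpr hy.2) (ae_iff.mp hb)
  rw [hnull, ENNReal.zero_div]

theorem lowerSemicontinuousAt_lowerApproxLimit
    (h : ∀ b : ℝ, (b : EReal) < lowerApproxLimit μ u x →
      ∃ ρ > (0 : ℝ), ∀ᵐ y ∂μ.restrict (ball x ρ), b ≤ u y) :
    LowerSemicontinuousAt (lowerApproxLimit μ u) x := by
  intro b hb
  obtain ⟨b', hbb', hb'⟩ := EReal.lt_iff_exists_real_btwn.mp hb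
  obtain ⟨ρ, hρ, hae⟩ := h b' hb'
  filter_upwards [ball_mem_nhds x (half_pos hρ)] with z hz
  refine hbb'.trans_le (le_lowerApproxLimit_of_ae_le (half_pos hρ) ?_)
  refine ae_restrict_of_ae_restrict_of_subset (fun y hy => ?_) hae
  have := dist_triangle y z x
  rw [mem_ball] at hy hz ⊢
  linarith

theorem exists_ae_sub_le_of_weakHarnack [OpensMeasurableSpace X] {C R β t ε : ℝ}
    (hμ : ∀ r, 0 < r → 0 < μ (ball x r) ∧ μ (ball x r) < ⊤) (hC : 0 ≤ C) (hR : 0 < R)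
    (hharnack : ∀ r, 0 < r → r < R → ∀ᵐ y ∂μ.restrict (ball x (r / 2)),
      t - u y ≤ C * ((∫ z in ball x r, max (t - u z) 0 ∂μ) / μ.real (ball x r)))
    (hβ : ∀ᵐ y ∂μ.restrict (ball x R), β ≤ u y)
    (ht : (t : EReal) ≤ lowerApproxLimit μ u x) (hε : 0 < ε) :
    ∃ ρ > (0 : ℝ), ∀ᵐ y ∂μ.restrict (ball x ρ), t - 2 * C * ε ≤ u y := by
  set M := max (t - β) 0
  have hM0 : 0 ≤ M := le_max_right _ _
  have hdensity : SublevelDensityZero μ u x (t - ε) :=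
    sublevelDensityZero_of_lt_lowerApproxLimit
      ((EReal.coe_lt_coe_iff.mpr (by linarith)).trans_le ht)
  have hsmall := ENNReal.tendsto_nhds_zero.mp hdensity (ENNReal.ofReal (ε / (M + 1)))
    (ENNReal.ofReal_pos.mpr (div_pos hε (by linarith)))
  obtain ⟨r, hrδ, hr⟩ := (hsmall.and (Ioo_mem_nhdsGT hR)).exists
  obtain ⟨hB0, hBfin⟩ := hμ r hr.1
  have hM : ∀ᵐ y ∂μ.restrict (ball x r), t - u y ≤ M := by
    filter_upwards [ae_restrict_of_ae_restrict_of_subset (ball_subset_ball hr.2.le) hβ]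
      with y hy
    exact le_max_of_le_left (by linarith)
  have havg := setAverage_max_sub_le measurableSet_ball hB0 hBfin.ne hε.le hM0
    hM ((ENNReal.div_le_iff_le_mul (Or.inl hB0.ne') (Or.inl hBfin.ne)).mp hrδ)
  refine ⟨r / 2, half_pos hr.1, ?_⟩
  filter_upwards [hharnack r hr.1 hr.2] with y hy
  nlinarith [mul_le_mul_of_nonneg_left havg hC]

end LowerApproxLimit

theorem stmt18_general {X : Type*} [MetricSpace X] [MeasurableSpace X] [BorelSpace X]
    (μ : Measure X) (Cμ : ℝ)
    (hdoub : ∀ (y : X) (ρ : ℝ), 0 < ρ →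
      0 < μ (ball y ρ) ∧ μ (ball y ρ) < ⊤ ∧
        μ (ball y (2 * ρ)) ≤ ENNReal.ofReal Cμ * μ (ball y ρ))
    (x : X)
    (u : X → ℝ)
    (C R : ℝ) (hC : 0 < C) (hR : 0 < R)
    (hharnack : ∀ (t : ℝ) (r : ℝ), 0 < r → r < R →
      ∀ᵐ y ∂μ.restrict (ball x (r / 2)),
        t - u y ≤ C * ((∫ z in ball x r, max (t - u z) 0 ∂μ) / (μ (ball x r)).toReal))
    (β : ℝ) (hβ : ∀ᵐ y ∂μ.restrict (ball x R), β ≤ u y) :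
    (∀ t : ℝ, (t : EReal) ≤ lowerApproxLimit μ u x → ∀ ε > (0 : ℝ),
        ∃ ρ > (0 : ℝ), ∀ᵐ y ∂μ.restrict (ball x ρ), t - 2 * C * ε ≤ u y)
    ∧ LowerSemicontinuousAt (lowerApproxLimit μ u) x := by
  have hbound : ∀ t : ℝ, (t : EReal) ≤ lowerApproxLimit μ u x → ∀ ε > (0 : ℝ),
      ∃ ρ > (0 : ℝ), ∀ᵐ y ∂μ.restrict (ball x ρ), t - 2 * C * ε ≤ u y :=
    fun t ht ε hε => exists_ae_sub_le_of_weakHarnack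
      (fun r hr => (hdoub x r hr).imp_right And.left) hC.le hR (hharnack t) hβ ht hε
  refine ⟨hbound, lowerSemicontinuousAt_lowerApproxLimit fun b hb => ?_⟩
  obtain ⟨t, hbt, ht⟩ := EReal.lt_iff_exists_real_btwn.mp hb
  have hbt' : b < t := EReal.coe_lt_coe_iff.mp hbt
  obtain ⟨ρ, hρ, hae⟩ := hbound t ht.le ((t - b) / (2 * C)) (div_pos (by linarith) (by positivity))
  refine ⟨ρ, hρ, hae.mono fun y hy => ?_⟩
  rwa [mul_div_cancel₀ _ (by positivity), sub_sub_cancel] at hy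

/-- If a locally integrable `u` satisfies the weak Harnack inequality near `x ∈ Ω` and is
bounded below a.e. on `B(x,R)`, then for every `t ≤ u^∧(x)` and `ε > 0` there is `ρ > 0`
with `u ≥ t − 2Cε` a.e. on `B(x,ρ)`; consequently `u^∧` is lower semicontinuous at `x`. -/
theorem stmt18 {X : Type*} [MetricSpace X] [MeasurableSpace X] [BorelSpace X]
    [CompleteSpace X] [ConnectedSpace X]
    (μ : Measure X) (Cμ : ℝ) (hCμ : 1 ≤ Cμ)
    (hdoub : ∀ (y : X) (ρ : ℝ), 0 < ρ →
      0 < μ (ball y ρ) ∧ μ (ball y ρ) < ⊤ ∧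
        μ (ball y (2 * ρ)) ≤ ENNReal.ofReal Cμ * μ (ball y ρ))
    (s : ℝ) (hs : 0 < s) (hs1 : s < 1)
    (Ω : Set X) (hΩ : IsOpen Ω) (x : X) (hx : x ∈ Ω)
    (u : X → ℝ) (hu : LocallyIntegrableOn u Ω μ)
    (C R : ℝ) (hC : 0 < C) (hR : 0 < R)
    (hball : closedBall x (2 * R) ⊆ Ω)
    (hharnack : ∀ (t : ℝ) (r : ℝ), 0 < r → r < R →
      ∀ᵐ y ∂μ.restrict (ball x (r / 2)),
        t - u y ≤ C * ((∫ z in ball x r, max (t - u z) 0 ∂μ) / (μ (ball x r)).toReal))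
    (β : ℝ) (hβ : ∀ᵐ y ∂μ.restrict (ball x R), β ≤ u y) :
    (∀ t : ℝ, (t : EReal) ≤ lowerApproxLimit μ u x → ∀ ε > (0 : ℝ),
        ∃ ρ > (0 : ℝ), ∀ᵐ y ∂μ.restrict (ball x ρ), t - 2 * C * ε ≤ u y)
    ∧ LowerSemicontinuousAt (lowerApproxLimit μ u) x :=
  stmt18_general μ Cμ hdoub x u C R hC hR hharnack β hβ
end
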